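/- arXiv:2005.12229 — 2 statements merged into one kernel-verified Lean document; each statement's English description precedes it below -/
import Mathlib

section
/- Let (M_n)_{n∈ℕ} be (d+1)×(d+1) integer matrices with nonnegative entries and determinant ±1, and let v ∈ ℝ^{d+1} have nonnegative coordinates and ‖v‖₁ = 1. If the series Σ_n ‖π_v M_{[0,n)}‖₁ of operator norms converges, then ⋂_{n∈ℕ} M_{[0,n)}(ℝ_{≥0}^{d+1}) = {t·v : t ≥ 0}. -/
/-- `prodM M k n = M_k * M_{k+1} * ⋯ * M_{n-1}` (the identity when `n ≤ k`). -/
def prodM {d : ℕ} (M : ℕ → Matrix (Fin (d + 1)) (Fin (d + 1)) ℤ) (k n : ℕ) :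
    Matrix (Fin (d + 1)) (Fin (d + 1)) ℤ :=
  ((List.range' k (n - k)).map M).prod

/-- The projection `π_y : z ↦ z - (h(z)/h(y)) • y` onto `P = {h = 0}`, as a linear map. -/
noncomputable def projL {d : ℕ} (y : Fin (d + 1) → ℝ) :
    (Fin (d + 1) → ℝ) →ₗ[ℝ] (Fin (d + 1) → ℝ) :=
  LinearMap.id - (∑ i, y i)⁻¹ •
    LinearMap.smulRight (∑ i, LinearMap.proj i : (Fin (d + 1) → ℝ) →ₗ[ℝ] ℝ) y

/-- The operator norm induced by the norm `‖z‖₁ = ∑ i, |z i|`. -/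
noncomputable def opNorm1 {d : ℕ} (f : (Fin (d + 1) → ℝ) →ₗ[ℝ] (Fin (d + 1) → ℝ)) : ℝ :=
  sSup {c : ℝ | ∃ z : Fin (d + 1) → ℝ, z ≠ 0 ∧ c = (∑ i, |f z i|) / (∑ i, |z i|)}

/-!
Write `A n = M_{[0,n)}`. A nonnegative integer matrix with nonzero determinant has every column
sum at least `1`, so `A n` does not decrease the coordinate sum `h` on the orthant. Hence a point
`w = A n z` of the `n`-th cone satisfies `‖π_v w‖₁ ≤ ‖π_v A n‖₁ · h(w) → 0`, which forces
`w = h(w) • v`. Conversely, points `w n` of the `n`-th cone with `h(w n) = 1` satisfy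
`‖w n - v‖₁ = ‖π_v (w n)‖₁ ≤ ‖π_v A n‖₁ → 0`; the cones are nested and closed (`A n` is
invertible), so `v` lies in all of them.
-/

open Filter Topology Matrix

section OpNorm1
variable {d : ℕ}

lemma norm_le_sum_abs {ι : Type*} [Fintype ι] (z : ι → ℝ) : ‖z‖ ≤ ∑ i, |z i| :=
  (pi_norm_le_iff_of_nonneg (Finset.sum_nonneg fun i _ => abs_nonneg (z i))).2 fun i =>
    Finset.single_le_sum (f := fun j => |z j|) (fun j _ => abs_nonneg (z j)) (Finset.mem_univ i)

lemma sum_abs_le_card_mul_norm {ι : Type*} [Fintype ι] (z : ι → ℝ) :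
    ∑ i, |z i| ≤ Fintype.card ι * ‖z‖ := by
  simpa using Finset.sum_le_card_nsmul Finset.univ (fun i => |z i|) ‖z‖
    fun i _ => norm_le_pi_norm z i

lemma bddAbove_opNorm1_set (f : (Fin (d + 1) → ℝ) →ₗ[ℝ] (Fin (d + 1) → ℝ)) :
    BddAbove {c : ℝ | ∃ z : Fin (d + 1) → ℝ, z ≠ 0 ∧ c = (∑ i, |f z i|) / (∑ i, |z i|)} := by
  set F := LinearMap.toContinuousLinearMap f
  refine ⟨(d + 1) * ‖F‖, ?_⟩
  rintro c ⟨z, hz, rfl⟩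
  have hpos : 0 < ∑ i, |z i| := (norm_pos_iff.2 hz).trans_le (norm_le_sum_abs z)
  rw [div_le_iff₀ hpos]
  calc ∑ i, |f z i| ≤ (d + 1) * ‖F z‖ := by simpa [F] using sum_abs_le_card_mul_norm (f z)
    _ ≤ (d + 1) * (‖F‖ * ‖z‖) := by gcongr; exact F.le_opNorm z
    _ ≤ (d + 1) * ‖F‖ * ∑ i, |z i| := by rw [← mul_assoc]; gcongr; exact norm_le_sum_abs z

lemma sum_abs_apply_le_opNorm1 (f : (Fin (d + 1) → ℝ) →ₗ[ℝ] (Fin (d + 1) → ℝ))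
    (z : Fin (d + 1) → ℝ) : ∑ i, |f z i| ≤ opNorm1 f * ∑ i, |z i| := by
  rcases eq_or_ne z 0 with rfl | hz
  · simp
  have hpos : 0 < ∑ i, |z i| := (norm_pos_iff.2 hz).trans_le (norm_le_sum_abs z)
  rw [← div_le_iff₀ hpos]
  exact le_csSup (bddAbove_opNorm1_set f) ⟨z, hz, rfl⟩

lemma opNorm1_nonneg (f : (Fin (d + 1) → ℝ) →ₗ[ℝ] (Fin (d + 1) → ℝ)) :
    0 ≤ opNorm1 f := by
  have h := sum_abs_apply_le_opNorm1 f (Pi.single 0 1)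
  simp only [Pi.single_apply, apply_ite, abs_one, abs_zero, Finset.sum_ite_eq',
    Finset.mem_univ, if_true, mul_one] at h
  exact (Finset.sum_nonneg fun i _ => abs_nonneg _).trans h

end OpNorm1

lemma projL_eq_sub_of_sum_eq_one {d : ℕ} {y : Fin (d + 1) → ℝ} (hy : ∑ i, y i = 1)
    (z : Fin (d + 1) → ℝ) : projL y z = z - (∑ i, z i) • y := by
  ext i
  simp [projL, hy]

def posCone {ι : Type*} [Fintype ι] (A : Matrix ι ι ℝ) : Set (ι → ℝ) :=
  (fun z => A.mulVec z) '' {z : ι → ℝ | ∀ i, 0 ≤ z i}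

section PosCone
variable {ι : Type*} [Fintype ι]

lemma mulVec_nonneg_of_nonneg {A : Matrix ι ι ℝ} (hA : ∀ i j, 0 ≤ A i j) {z : ι → ℝ}
    (hz : ∀ i, 0 ≤ z i) (i : ι) : 0 ≤ (A *ᵥ z) i :=
  Finset.sum_nonneg fun j _ => mul_nonneg (hA i j) (hz j)

lemma smul_mem_posCone {A : Matrix ι ι ℝ} {t : ℝ} (ht : 0 ≤ t) {w : ι → ℝ}
    (hw : w ∈ posCone A) : t • w ∈ posCone A := by
  obtain ⟨z, hz, rfl⟩ := hw
  exact ⟨t • z, fun i => mul_nonneg ht (hz i), mulVec_smul A t z⟩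

lemma posCone_mul_subset (A : Matrix ι ι ℝ) {B : Matrix ι ι ℝ} (hB : ∀ i j, 0 ≤ B i j) :
    posCone (A * B) ⊆ posCone A := by
  rintro _ ⟨z, hz, rfl⟩
  exact ⟨B *ᵥ z, mulVec_nonneg_of_nonneg hB hz, mulVec_mulVec z A B⟩

lemma isClosed_posCone [DecidableEq ι] {A : Matrix ι ι ℝ} (hA : IsUnit A.det) :
    IsClosed (posCone A) := by
  have : posCone A = (fun w => A⁻¹ *ᵥ w) ⁻¹' Set.Ici 0 :=
    congrFun (Set.image_eq_preimage_of_inverse (f := (A *ᵥ ·)) (g := (A⁻¹ *ᵥ ·))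
      (fun z => by simp only [mulVec_mulVec, nonsing_inv_mul A hA, one_mulVec])
      (fun w => by simp only [mulVec_mulVec, mul_nonsing_inv A hA, one_mulVec])) _
  rw [this]
  exact isClosed_Ici.preimage (continuous_const.matrix_mulVec continuous_id)

lemma sum_le_sum_mulVec {A : Matrix ι ι ℝ} (hcol : ∀ j, 1 ≤ ∑ i, A i j) {z : ι → ℝ}
    (hz : ∀ i, 0 ≤ z i) :
    ∑ i, z i ≤ ∑ i, (A *ᵥ z) i := by
  rw [← one_dotProduct, ← one_dotProduct, dotProduct_mulVec]
  refine Finset.sum_le_sum fun j _ => ?_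
  simpa [vecMul, dotProduct] using le_mul_of_one_le_left (hz j) (hcol j)

lemma exists_mem_posCone_sum_eq_one [DecidableEq ι] {A : Matrix ι ι ℝ} {j : ι}
    (hj : 0 < ∑ i, A i j) : ∃ w ∈ posCone A, ∑ i, w i = 1 := by
  refine ⟨A *ᵥ ((∑ i, A i j)⁻¹ • Pi.single j 1), ⟨_, fun i => ?_, rfl⟩, ?_⟩
  · rw [Pi.smul_apply, Pi.single_apply]
    split_ifs <;> positivity
  · simp [mulVec_smul, ← Finset.mul_sum, inv_mul_cancel₀ hj.ne']

end PosCone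

lemma one_le_sum_apply_of_det_ne_zero {ι : Type*} [Fintype ι] [DecidableEq ι]
    {B : Matrix ι ι ℤ} (hB : ∀ i j, 0 ≤ B i j) (hdet : B.det ≠ 0) (j : ι) :
    1 ≤ ∑ i, B i j := by
  obtain ⟨i, hi⟩ : ∃ i, B i j ≠ 0 := by
    by_contra! h
    exact hdet (det_eq_zero_of_column_eq_zero j h)
  calc 1 ≤ B i j := (hB i j).lt_of_ne' hi
    _ ≤ ∑ i, B i j := Finset.single_le_sum (fun k _ => hB k j) (Finset.mem_univ i)

section Prod
variable {d : ℕ} (M : ℕ → Matrix (Fin (d + 1)) (Fin (d + 1)) ℤ)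

lemma prodM_zero_zero : prodM M 0 0 = 1 := rfl

lemma prodM_zero_succ (n : ℕ) : prodM M 0 (n + 1) = prodM M 0 n * M n := by
  simp [prodM, List.range'_concat]

lemma prodM_nonneg (hpos : ∀ n i j, 0 ≤ M n i j) (n : ℕ) (i j : Fin (d + 1)) :
    0 ≤ prodM M 0 n i j := by
  induction n generalizing i j with
  | zero => rw [prodM_zero_zero, one_apply]; split_ifs <;> simp
  | succ n ih =>
    rw [prodM_zero_succ, mul_apply]
    exact Finset.sum_nonneg fun k _ => mul_nonneg (ih i k) (hpos n k j)

lemma det_prodM_ne_zero (hdet : ∀ n, (M n).det = 1 ∨ (M n).det = -1) (n : ℕ) :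
    (prodM M 0 n).det ≠ 0 := by
  induction n with
  | zero => simp [prodM_zero_zero]
  | succ n ih =>
    rw [prodM_zero_succ, det_mul]
    exact mul_ne_zero ih (by rcases hdet n with h | h <;> simp [h])

end Prod

section Contraction
variable {d : ℕ} {v : Fin (d + 1) → ℝ}

lemma sum_abs_projL_mulVec_le {A : Matrix (Fin (d + 1)) (Fin (d + 1)) ℝ}
    (hcol : ∀ j, 1 ≤ ∑ i, A i j) {z : Fin (d + 1) → ℝ} (hz : ∀ i, 0 ≤ z i) :
    ∑ i, |projL v (A *ᵥ z) i| ≤ opNorm1 (projL v ∘ₗ A.mulVecLin) * ∑ i, (A *ᵥ z) i :=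
  calc ∑ i, |projL v (A *ᵥ z) i| ≤ opNorm1 (projL v ∘ₗ A.mulVecLin) * ∑ i, |z i| :=
        sum_abs_apply_le_opNorm1 (projL v ∘ₗ A.mulVecLin) z
    _ = opNorm1 (projL v ∘ₗ A.mulVecLin) * ∑ i, z i := by simp only [abs_of_nonneg (hz _)]
    _ ≤ opNorm1 (projL v ∘ₗ A.mulVecLin) * ∑ i, (A *ᵥ z) i :=
        mul_le_mul_of_nonneg_left (sum_le_sum_mulVec hcol hz) (opNorm1_nonneg _)

variable {A : ℕ → Matrix (Fin (d + 1)) (Fin (d + 1)) ℝ}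

lemma iInter_posCone_subset_ray (hA : ∀ n i j, 0 ≤ A n i j) (hcol : ∀ n j, 1 ≤ ∑ i, A n i j)
    (hv : ∑ i, v i = 1)
    (hlim : Tendsto (fun n => opNorm1 (projL v ∘ₗ (A n).mulVecLin)) atTop (𝓝 0)) :
    ⋂ n, posCone (A n) ⊆ {w | ∃ t : ℝ, 0 ≤ t ∧ w = t • v} := by
  intro w hw
  rw [Set.mem_iInter] at hw
  have hw_nonneg : ∀ i, 0 ≤ w i := by
    obtain ⟨z, hz, rfl⟩ := hw 0
    exact mulVec_nonneg_of_nonneg (hA 0) hz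
  have hbound : ∀ n, ∑ i, |projL v w i| ≤ opNorm1 (projL v ∘ₗ (A n).mulVecLin) * ∑ i, w i := by
    intro n
    obtain ⟨z, hz, rfl⟩ := hw n
    exact sum_abs_projL_mulVec_le (hcol n) hz
  have hzero : ∑ i, |projL v w i| ≤ 0 := by
    simpa using ge_of_tendsto (hlim.mul_const (∑ i, w i)) (Eventually.of_forall hbound)
  have hproj : projL v w = 0 := norm_le_zero_iff.1 ((norm_le_sum_abs _).trans hzero)
  rw [projL_eq_sub_of_sum_eq_one hv, sub_eq_zero] at hproj
  exact ⟨_, Finset.sum_nonneg fun i _ => hw_nonneg i, hproj⟩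

lemma mem_posCone_of_tendsto (hcol : ∀ n j, 1 ≤ ∑ i, A n i j) (hv : ∑ i, v i = 1)
    (hlim : Tendsto (fun n => opNorm1 (projL v ∘ₗ (A n).mulVecLin)) atTop (𝓝 0))
    (hmono : Antitone fun n => posCone (A n))
    (hclosed : ∀ n, IsClosed (posCone (A n))) (n : ℕ) : v ∈ posCone (A n) := by
  choose w hwA hw1 using fun m =>
    exists_mem_posCone_sum_eq_one (zero_lt_one.trans_le (hcol m 0))
  have hdist : ∀ m, ‖w m - v‖ ≤ opNorm1 (projL v ∘ₗ (A m).mulVecLin) := by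
    intro m
    obtain ⟨z, hz, hzw⟩ := hwA m
    dsimp only at hzw
    calc ‖w m - v‖ ≤ ∑ i, |(w m - v) i| := norm_le_sum_abs _
      _ = ∑ i, |projL v (A m *ᵥ z) i| := by
          rw [hzw, projL_eq_sub_of_sum_eq_one hv, hw1, one_smul]
      _ ≤ opNorm1 (projL v ∘ₗ (A m).mulVecLin) * ∑ i, (A m *ᵥ z) i :=
          sum_abs_projL_mulVec_le (hcol m) hz
      _ = opNorm1 (projL v ∘ₗ (A m).mulVecLin) := by rw [hzw, hw1, mul_one]
  have hw_lim : Tendsto w atTop (𝓝 v) :=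
    tendsto_iff_norm_sub_tendsto_zero.2 (squeeze_zero (fun _ => norm_nonneg _) hdist hlim)
  exact (hclosed n).mem_of_tendsto hw_lim (eventually_atTop.2 ⟨n, fun m hm => hmono hm (hwA m)⟩)

end Contraction

theorem cone_intersection_of_summable_general {d : ℕ}
    (M : ℕ → Matrix (Fin (d + 1)) (Fin (d + 1)) ℤ)
    (hpos : ∀ n i j, 0 ≤ M n i j)
    (hdet : ∀ n, (M n).det = 1 ∨ (M n).det = -1)
    (v : Fin (d + 1) → ℝ) (hv : ∀ i, 0 ≤ v i) (hv1 : (∑ i, |v i|) = 1)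
    (hsum : Summable fun n : ℕ =>
      opNorm1 (projL v ∘ₗ ((prodM M 0 n).map (Int.cast : ℤ → ℝ)).mulVecLin)) :
    (⋂ n : ℕ, (fun z => ((prodM M 0 n).map (Int.cast : ℤ → ℝ)).mulVec z) ''
        {z : Fin (d + 1) → ℝ | ∀ i, 0 ≤ z i}) = {w | ∃ t : ℝ, 0 ≤ t ∧ w = t • v} := by
  set A : ℕ → Matrix (Fin (d + 1)) (Fin (d + 1)) ℝ :=
    fun n => (prodM M 0 n).map (Int.cast : ℤ → ℝ)
  have hA : ∀ n i j, 0 ≤ A n i j := fun n i j => Int.cast_nonneg (prodM_nonneg M hpos n i j)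
  have hcol : ∀ n j, 1 ≤ ∑ i, A n i j := fun n j => by
    simp only [A, map_apply]
    exact_mod_cast one_le_sum_apply_of_det_ne_zero (prodM_nonneg M hpos n)
      (det_prodM_ne_zero M hdet n) j
  have hmono : Antitone fun n => posCone (A n) := antitone_nat_of_succ_le fun n => by
    have hsucc : A (n + 1) = A n * (M n).map (Int.cast : ℤ → ℝ) := by
      simp only [A, prodM_zero_succ]
      exact Matrix.map_mul (f := Int.castRingHom ℝ)
    rw [hsucc]
    exact posCone_mul_subset (A n) fun i j => Int.cast_nonneg (hpos n i j)
  have hclosed : ∀ n, IsClosed (posCone (A n)) := fun n => isClosed_posCone <| by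
    rw [← Int.cast_det]
    exact (Int.cast_ne_zero.2 (det_prodM_ne_zero M hdet n)).isUnit
  have hv' : ∑ i, v i = 1 := by simpa only [abs_of_nonneg (hv _)] using hv1
  have hlim := hsum.tendsto_atTop_zero
  refine (iInter_posCone_subset_ray hA hcol hv' hlim).antisymm ?_
  rintro _ ⟨t, ht, rfl⟩
  exact Set.mem_iInter.2 fun n =>
    smul_mem_posCone ht (mem_posCone_of_tendsto hcol hv' hlim hmono hclosed n)

/-- If `Σ_n ‖π_v M_{[0,n)}‖₁` converges, then
`⋂_n M_{[0,n)}(ℝ₊^{d+1}) = ℝ₊·v`. -/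
theorem cone_intersection_of_summable {d : ℕ} (hd : 1 ≤ d)
    (M : ℕ → Matrix (Fin (d + 1)) (Fin (d + 1)) ℤ)
    (hpos : ∀ n i j, 0 ≤ M n i j)
    (hdet : ∀ n, (M n).det = 1 ∨ (M n).det = -1)
    (v : Fin (d + 1) → ℝ) (hv : ∀ i, 0 ≤ v i) (hv1 : (∑ i, |v i|) = 1)
    (hsum : Summable fun n : ℕ =>
      opNorm1 (projL v ∘ₗ ((prodM M 0 n).map (Int.cast : ℤ → ℝ)).mulVecLin)) :
    (⋂ n : ℕ, (fun z => ((prodM M 0 n).map (Int.cast : ℤ → ℝ)).mulVec z) ''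
        {z : Fin (d + 1) → ℝ | ∀ i, 0 ≤ z i}) = {w | ∃ t : ℝ, 0 ≤ t ∧ w = t • v} :=
  cone_intersection_of_summable_general M hpos hdet v hv hv1 hsum
end

section
/- Let v ∈ ℝ^{d+1} have nonnegative coordinates with ‖v‖₁ = 1, and let N be any (d+1)×(d+1) real matrix. Then ‖π_v N‖₁ ≤ (d+1) · sup{ ‖φN‖_∞ : φ ∈ (ℝ^{d+1})*, φ(v) = 0, ‖φ‖_∞ ≤ 1 }, where ‖π_v N‖₁ is the operator norm of π_v∘N induced by the ℓ¹ norm on ℝ^{d+1}. -/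
/-- The sup norm `‖z‖_∞ = max_i |z i|`. -/
noncomputable def normInf {d : ℕ} (z : Fin (d + 1) → ℝ) : ℝ :=
  ⨆ i, |z i|

open Matrix

section

variable {d : ℕ}

lemma abs_le_normInf (z : Fin (d + 1) → ℝ) (j : Fin (d + 1)) : |z j| ≤ normInf z :=
  le_ciSup (f := fun i => |z i|) (Set.finite_range _).bddAbove j

lemma normInf_le {z : Fin (d + 1) → ℝ} {c : ℝ} (h : ∀ j, |z j| ≤ c) : normInf z ≤ c :=
  ciSup_le h

lemma abs_dotProduct_le_normInf_mul (x z : Fin (d + 1) → ℝ) :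
    |x ⬝ᵥ z| ≤ normInf x * ∑ j, |z j| :=
  calc |x ⬝ᵥ z| ≤ ∑ j, |x j| * |z j| := by
        simpa only [dotProduct, abs_mul] using Finset.abs_sum_le_sum_abs (fun j => x j * z j) _
    _ ≤ ∑ j, normInf x * |z j| :=
        Finset.sum_le_sum fun j _ => by gcongr; exact abs_le_normInf x j
    _ = normInf x * ∑ j, |z j| := (Finset.mul_sum _ _ _).symm

lemma opNorm1_le {f : (Fin (d + 1) → ℝ) →ₗ[ℝ] (Fin (d + 1) → ℝ)} {C : ℝ} (hC : 0 ≤ C)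
    (h : ∀ z, ∑ i, |f z i| ≤ C * ∑ i, |z i|) : opNorm1 f ≤ C := by
  refine Real.sSup_le ?_ hC
  rintro c ⟨z, hz, rfl⟩
  have hz1 : 0 < ∑ i, |z i| := by
    obtain ⟨j, hj⟩ := Function.ne_iff.mp hz
    exact Finset.sum_pos' (fun i _ => abs_nonneg _) ⟨j, Finset.mem_univ j, abs_pos.mpr hj⟩
  exact (div_le_iff₀ hz1).mpr (h z)

lemma projL_apply (y z : Fin (d + 1) → ℝ) :
    projL y z = z - ((∑ i, y i)⁻¹ * ∑ i, z i) • y := by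
  ext i
  simp [projL, LinearMap.sum_apply, mul_assoc]

lemma sum_projL_apply {y : Fin (d + 1) → ℝ} (hy : ∑ i, y i ≠ 0) (z : Fin (d + 1) → ℝ) :
    ∑ i, projL y z i = 0 := by
  simp only [projL_apply, Pi.sub_apply, Pi.smul_apply, smul_eq_mul, Finset.sum_sub_distrib,
    ← Finset.mul_sum]
  field_simp
  ring

lemma dotProduct_projL {φ y : Fin (d + 1) → ℝ} (hφ : φ ⬝ᵥ y = 0) (z : Fin (d + 1) → ℝ) :
    φ ⬝ᵥ projL y z = φ ⬝ᵥ z := by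
  rw [projL_apply, dotProduct_sub, dotProduct_smul, hφ, smul_zero, sub_zero]

lemma exists_dotProduct_eq_sum_abs {v w : Fin (d + 1) → ℝ} (hv : ∀ i, 0 ≤ v i)
    (hv1 : ∑ i, v i = 1) (hw : ∑ i, w i = 0) :
    ∃ φ : Fin (d + 1) → ℝ, φ ⬝ᵥ v = 0 ∧ normInf φ ≤ 1 ∧ ∑ i, |w i| = 2 * (φ ⬝ᵥ w) := by
  set s : Fin (d + 1) → ℝ := fun i => SignType.sign (w i)
  have hs : ∀ i, |s i| ≤ 1 := fun i => by
    simp only [s]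
    rcases SignType.sign (w i) with _ | _ | _ <;> simp
  set t := s ⬝ᵥ v
  have ht : |t| ≤ 1 :=
    calc |t| ≤ normInf s * ∑ i, |v i| := abs_dotProduct_le_normInf_mul s v
      _ ≤ 1 * 1 := by
        gcongr
        · exact normInf_le hs
        · simp only [abs_of_nonneg (hv _), hv1, le_refl]
      _ = 1 := one_mul 1
  refine ⟨fun i => (s i - t) / 2, ?_, normInf_le fun i => ?_, ?_⟩
  · simp only [dotProduct, sub_div, sub_mul, Finset.sum_sub_distrib, div_mul_eq_mul_div,
      ← Finset.sum_div, ← Finset.mul_sum, hv1, t]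
    ring
  · rw [abs_div, abs_two, div_le_one two_pos]
    linarith [abs_sub (s i) t, hs i]
  · simp only [dotProduct, sub_div, sub_mul, Finset.sum_sub_distrib, div_mul_eq_mul_div,
      ← Finset.sum_div, ← Finset.mul_sum, hw, s, sign_mul_self]
    ring

lemma bddAbove_normInf_vecMul (v : Fin (d + 1) → ℝ) (N : Matrix (Fin (d + 1)) (Fin (d + 1)) ℝ) :
    BddAbove {c : ℝ | ∃ φ : Fin (d + 1) → ℝ,
      φ ⬝ᵥ v = 0 ∧ normInf φ ≤ 1 ∧ c = normInf (φ ᵥ* N)} := by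
  refine ⟨∑ i, ∑ j, |N i j|, ?_⟩
  rintro c ⟨φ, -, hφ, rfl⟩
  refine normInf_le fun j => ?_
  calc |(φ ᵥ* N) j| = |φ ⬝ᵥ fun i => N i j| := rfl
    _ ≤ normInf φ * ∑ i, |N i j| := abs_dotProduct_le_normInf_mul _ _
    _ ≤ 1 * ∑ i, |N i j| := by gcongr
    _ ≤ ∑ i, ∑ j, |N i j| := by
      rw [one_mul]
      exact Finset.sum_le_sum fun i _ =>
        Finset.single_le_sum (fun j _ => abs_nonneg (N i j)) (Finset.mem_univ j)

end

/-- `‖π_v N‖₁ ≤ (d+1) · sup {‖φN‖_∞ : φ(v) = 0, ‖φ‖_∞ ≤ 1}`. -/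
theorem opNorm_proj_le_dual_bound {d : ℕ} (hd : 1 ≤ d)
    (v : Fin (d + 1) → ℝ) (hv : ∀ i, 0 ≤ v i) (hv1 : (∑ i, |v i|) = 1)
    (N : Matrix (Fin (d + 1)) (Fin (d + 1)) ℝ) :
    opNorm1 (projL v ∘ₗ N.mulVecLin) ≤
      ((d : ℝ) + 1) * sSup {c : ℝ | ∃ φ : Fin (d + 1) → ℝ,
        dotProduct φ v = 0 ∧ normInf φ ≤ 1 ∧ c = normInf (Matrix.vecMul φ N)} := by
  set S := sSup {c : ℝ | ∃ φ : Fin (d + 1) → ℝ,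
    φ ⬝ᵥ v = 0 ∧ normInf φ ≤ 1 ∧ c = normInf (φ ᵥ* N)}
  have hsum : ∑ i, v i = 1 := by simpa only [abs_of_nonneg (hv _)] using hv1
  have hS : 0 ≤ S :=
    le_csSup_of_le (bddAbove_normInf_vecMul v N) ⟨0, zero_dotProduct v, by simp [normInf], rfl⟩
      (by simp [normInf])
  have hd2 : (2 : ℝ) ≤ d + 1 := by norm_cast; omega
  refine opNorm1_le (by positivity) fun z => ?_
  obtain ⟨φ, hφv, hφ, hw⟩ := exists_dotProduct_eq_sum_abs hv hsum
    (sum_projL_apply (hsum ▸ one_ne_zero) (N *ᵥ z))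
  calc ∑ i, |(projL v ∘ₗ N.mulVecLin) z i| = 2 * (φ ⬝ᵥ projL v (N *ᵥ z)) := hw
    _ = 2 * ((φ ᵥ* N) ⬝ᵥ z) := by rw [dotProduct_projL hφv, dotProduct_mulVec]
    _ ≤ 2 * (normInf (φ ᵥ* N) * ∑ i, |z i|) := by
      gcongr; exact (le_abs_self _).trans (abs_dotProduct_le_normInf_mul _ _)
    _ ≤ 2 * (S * ∑ i, |z i|) := by
      gcongr; exact le_csSup (bddAbove_normInf_vecMul v N) ⟨φ, hφv, hφ, rfl⟩
    _ ≤ (d + 1) * S * ∑ i, |z i| := by rw [mul_assoc]; gcongr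
end
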